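/- arXiv:2408.11610 — 3 statements merged into one kernel-verified Lean document; each statement's English description precedes it below -/
import Mathlib

section
/- Let B, M be n×n circulant matrices with generator vectors b and m, and x = [x_1,...,x_n] ∈ ℂ^n. Then (B ⊙ Θ_M)^T y = H_y · D_{c(M)} · vec_C(B ⊙ Θ_M), where H_y is the n×n Hankel-type matrix with entries (H_y)_{ij} = y_{((i+j-2) mod n)+1}. -/
open Matrix

/-- Sparsity-preserving circulant identity for the transpose:
`(B ⊙ Θ_M)ᵀ y = H_y · D_{c(M)} · vec_C(B ⊙ Θ_M)`, where `(H_y) i j = y (i + j)`. -/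
theorem circulant_hadamard_sgn_transpose_mulVec (n : ℕ) [NeZero n]
    (B M Θ : Matrix (Fin n) (Fin n) ℂ) (b m : Fin n → ℂ)
    (hB : B = Matrix.circulant b) (hM : M = Matrix.circulant m)
    (hΘ : Θ = Matrix.of fun i j => if M i j = 0 then (0 : ℂ) else 1)
    (y : Fin n → ℂ) :
    (Matrix.hadamard B Θ)ᵀ.mulVec y =
      ((Matrix.of fun (i j : Fin n) => y (i + j)) *
        Matrix.diagonal (fun i : Fin n => if m i = 0 then (0 : ℂ) else 1)).mulVec
        (fun i : Fin n => Matrix.hadamard B Θ i 0) := by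
  subst hB hM hΘ
  rw [← Matrix.mulVec_mulVec]
  funext i
  simp only [mulVec, dotProduct, transpose_apply, hadamard_apply, circulant_apply, of_apply,
    diagonal_mulVec_single]
  rw [← Equiv.sum_comp (Equiv.addLeft i)]
  refine Finset.sum_congr rfl fun k _ => ?_
  simp only [Equiv.coe_addLeft, diagonal, of_apply, mulVec, dotProduct]
  rw [Finset.sum_eq_single k]
  · simp only [add_sub_cancel_left, sub_zero, if_pos rfl]
    by_cases h : m k = 0 <;> simp [h] <;> ring
  · intro j _ hj; simp [hj.symm]
  · simp
end

section
/- Feasibility and attainment: with the notation of the circulant structured backward error theorem (X̂ full row rank, r_d = [r_f; r_g]), define ΔE_min = X̂^H (X̂ X̂^H)^{-1} r_d ∈ ℂ^{5n} and extract ΔA = Cr((1/w₁)D_a^{-1}[I_n 0]ΔE_min), ΔB, ΔC, Δf, Δg analogously from the corresponding n-blocks of ΔE_min. Then these perturbations are circulant (for ΔA, ΔB, ΔC) and satisfy the perturbation equations ΔA x̃ + ΔB^T ỹ − Δf = r_f and ΔB x̃ + ΔC ỹ − Δg = r_g. -/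
open Matrix

/-- Feasibility and attainment: the perturbations extracted from the blocks of the
minimum-norm solution `ΔE_min = X̂ᴴ (X̂ X̂ᴴ)⁻¹ r_d` are circulant (for `ΔA, ΔB, ΔC`)
and satisfy the perturbation equations. -/
theorem circulant_min_perturbation_feasible (n : ℕ) [NeZero n]
    (A B C : Matrix (Fin n) (Fin n) ℂ) (a b c : Fin n → ℂ)
    (hA : A = Matrix.circulant a) (hB : B = Matrix.circulant b)
    (hC : C = Matrix.circulant c)
    (f g xt yt : Fin n → ℂ) (w1 w2 w3 w4 w5 : ℝ) (hw4 : w4 ≠ 0) (hw5 : w5 ≠ 0) :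
    let rf := f - A.mulVec xt - Bᵀ.mulVec yt
    let rg := g - B.mulVec xt - C.mulVec yt
    let rd : Fin 2 × Fin n → ℂ := fun p => if p.1 = 0 then rf p.2 else rg p.2
    let Xh : Matrix (Fin 2 × Fin n) (Fin 5 × Fin n) ℂ := Matrix.of fun p q =>
      if p.1 = 0 then
        (if q.1 = 0 then ((1 / (w1 * Real.sqrt n) : ℝ) : ℂ) * Matrix.circulant xt p.2 q.2
         else if q.1 = 1 then ((1 / (w2 * Real.sqrt n) : ℝ) : ℂ) * yt (p.2 + q.2)
         else if q.1 = 3 then -((1 / w4 : ℝ) : ℂ) * (if p.2 = q.2 then 1 else 0)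
         else 0)
      else
        (if q.1 = 1 then ((1 / (w2 * Real.sqrt n) : ℝ) : ℂ) * Matrix.circulant xt p.2 q.2
         else if q.1 = 2 then ((1 / (w3 * Real.sqrt n) : ℝ) : ℂ) * Matrix.circulant yt p.2 q.2
         else if q.1 = 4 then -((1 / w5 : ℝ) : ℂ) * (if p.2 = q.2 then 1 else 0)
         else 0)
    ∀ _hfr : IsUnit (Xh * Xhᴴ),
    let e0 := Xhᴴ.mulVec ((Xh * Xhᴴ)⁻¹.mulVec rd)
    let dA := Matrix.circulant (fun k : Fin n =>
      ((1 / (w1 * Real.sqrt n) : ℝ) : ℂ) * e0 (0, k))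
    let dB := Matrix.circulant (fun k : Fin n =>
      ((1 / (w2 * Real.sqrt n) : ℝ) : ℂ) * e0 (1, k))
    let dC := Matrix.circulant (fun k : Fin n =>
      ((1 / (w3 * Real.sqrt n) : ℝ) : ℂ) * e0 (2, k))
    let df := fun k : Fin n => ((1 / w4 : ℝ) : ℂ) * e0 (3, k)
    let dg := fun k : Fin n => ((1 / w5 : ℝ) : ℂ) * e0 (4, k)
    (∃ u, dA = Matrix.circulant u) ∧ (∃ u, dB = Matrix.circulant u) ∧
    (∃ u, dC = Matrix.circulant u) ∧
    dA.mulVec xt + dBᵀ.mulVec yt - df = rf ∧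
    dB.mulVec xt + dC.mulVec yt - dg = rg := by
  intro rf rg rd Xh hfr e0 dA dB dC df dg
  have hdet : IsUnit (Xh * Xhᴴ).det := (Matrix.isUnit_iff_isUnit_det _).mp hfr
  have key : Xh.mulVec e0 = rd := by
    show Xh.mulVec (Xhᴴ.mulVec ((Xh * Xhᴴ)⁻¹.mulVec rd)) = rd
    rw [Matrix.mulVec_mulVec, Matrix.mulVec_mulVec, Matrix.mul_nonsing_inv _ hdet,
      Matrix.one_mulVec]
  refine ⟨⟨_, rfl⟩, ⟨_, rfl⟩, ⟨_, rfl⟩, ?_, ?_⟩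
  · funext j
    have h1 : Xh.mulVec e0 (0, j) = rf j := by rw [key]; simp [rd]
    rw [← h1]
    simp only [Pi.add_apply, Pi.sub_apply, Matrix.mulVec, dotProduct,
      Matrix.transpose_apply, dA, dB, df, Xh, Matrix.of_apply, Matrix.circulant_apply]
    rw [Fintype.sum_prod_type, Fin.sum_univ_five]
    simp only [show ((0:Fin 5) = 0) = True by simp, show ((1:Fin 5) = 0) = False by decide,
      show ((2:Fin 5) = 0) = False by decide, show ((3:Fin 5) = 0) = False by decide,
      show ((4:Fin 5) = 0) = False by decide, show ((1:Fin 5) = 1) = True by simp,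
      show ((2:Fin 5) = 1) = False by decide, show ((3:Fin 5) = 1) = False by decide,
      show ((4:Fin 5) = 1) = False by decide, show ((3:Fin 5) = 3) = True by simp,
      show ((2:Fin 5) = 3) = False by decide, show ((4:Fin 5) = 3) = False by decide,
      if_true, if_false, ite_true, ite_false, mul_ite, mul_one, mul_zero, ite_mul, zero_mul,
      neg_mul, Finset.sum_ite_eq, Finset.mem_univ, Finset.sum_const_zero, add_zero,
      Finset.sum_neg_distrib]
    have e1 : ∑ k, ((1 / (w1 * Real.sqrt n) : ℝ) : ℂ) * e0 (0, j - k) * xt k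
        = ∑ k, ((1 / (w1 * Real.sqrt n) : ℝ) : ℂ) * xt (j - k) * e0 (0, k) := by
      refine Fintype.sum_equiv (Equiv.subLeft j) _ _ (fun k => ?_)
      simp [Equiv.subLeft, sub_sub_cancel]; ring
    have e2 : ∑ k, ((1 / (w2 * Real.sqrt n) : ℝ) : ℂ) * e0 (1, k - j) * yt k
        = ∑ k, ((1 / (w2 * Real.sqrt n) : ℝ) : ℂ) * yt (j + k) * e0 (1, k) := by
      refine Fintype.sum_equiv (Equiv.subRight j) _ _ (fun k => ?_)
      simp [Equiv.subRight, add_sub_cancel]; ring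
    rw [e1, e2]; ring
  · funext j
    have h1 : Xh.mulVec e0 (1, j) = rg j := by rw [key]; simp [rd]
    rw [← h1]
    simp only [Pi.add_apply, Pi.sub_apply, Matrix.mulVec, dotProduct,
      Matrix.transpose_apply, dB, dC, dg, Xh, Matrix.of_apply, Matrix.circulant_apply]
    rw [Fintype.sum_prod_type, Fin.sum_univ_five]
    simp only [show ((1:Fin 2) = 0) = False by decide,
      show ((0:Fin 5) = 1) = False by decide, show ((1:Fin 5) = 1) = True by simp,
      show ((2:Fin 5) = 1) = False by decide, show ((3:Fin 5) = 1) = False by decide,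
      show ((4:Fin 5) = 1) = False by decide, show ((2:Fin 5) = 2) = True by simp,
      show ((0:Fin 5) = 2) = False by decide, show ((3:Fin 5) = 2) = False by decide,
      show ((4:Fin 5) = 2) = False by decide, show ((4:Fin 5) = 4) = True by simp,
      show ((0:Fin 5) = 4) = False by decide, show ((3:Fin 5) = 4) = False by decide,
      if_true, if_false, ite_true, ite_false, mul_ite, mul_one, mul_zero, ite_mul, zero_mul,
      neg_mul, Finset.sum_ite_eq, Finset.mem_univ, Finset.sum_const_zero, add_zero,
      Finset.sum_neg_distrib]
    have e1 : ∑ k, ((1 / (w2 * Real.sqrt n) : ℝ) : ℂ) * e0 (1, j - k) * xt k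
        = ∑ k, ((1 / (w2 * Real.sqrt n) : ℝ) : ℂ) * xt (j - k) * e0 (1, k) := by
      refine Fintype.sum_equiv (Equiv.subLeft j) _ _ (fun k => ?_)
      simp [Equiv.subLeft, sub_sub_cancel]; ring
    have e2 : ∑ k, ((1 / (w3 * Real.sqrt n) : ℝ) : ℂ) * e0 (2, j - k) * yt k
        = ∑ k, ((1 / (w3 * Real.sqrt n) : ℝ) : ℂ) * yt (j - k) * e0 (2, k) := by
      refine Fintype.sum_equiv (Equiv.subLeft j) _ _ (fun k => ?_)
      simp [Equiv.subLeft, sub_sub_cancel]; ring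
    rw [e1, e2]; ring
end

section
/- Rigal–Gaches formula: let A ∈ ℂ^{N×N}, d ∈ ℂ^N with d ≠ 0, and ũ ∈ ℂ^N with ũ ≠ 0. Then the minimum of ‖( ‖ΔA‖_F/‖A‖_F, ‖Δd‖₂/‖d‖₂ )‖₂ over all ΔA ∈ ℂ^{N×N}, Δd ∈ ℂ^N satisfying (A + ΔA)ũ = d + Δd equals ‖d − Aũ‖₂ / √(‖A‖_F² ‖ũ‖₂² + ‖d‖₂²). -/
/-!
Write `r = d - A ũ` and `s = ‖A‖_F² ‖ũ‖² + ‖d‖²`. A feasible perturbation satisfies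
`r = ΔA ũ - Δd`, so `‖r‖ ≤ ‖ΔA‖_F ‖ũ‖ + ‖Δd‖ = (‖ΔA‖_F/‖A‖_F)(‖A‖_F ‖ũ‖) + (‖Δd‖/‖d‖) ‖d‖`,
and Cauchy–Schwarz in `ℝ²` bounds the right-hand side by `√s` times the objective.
Both inequalities are equalities for the rank-one perturbation
`ΔA = (‖A‖_F²/s) r ũ*`, `Δd = -(‖d‖²/s) r`.
-/

open Matrix WithLp
open scoped Matrix.Norms.Frobenius

theorem Real.mul_add_mul_le_sqrt_mul_sqrt (a b c d : ℝ) :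
    a * c + b * d ≤ √(a ^ 2 + b ^ 2) * √(c ^ 2 + d ^ 2) := by
  simpa [Fin.sum_univ_two] using Real.sum_mul_le_sqrt_mul_sqrt Finset.univ ![a, b] ![c, d]

theorem Real.div_sqrt_le_sqrt_of_le_mul_add {ρ p q a μ δ : ℝ} (ha : 0 < a) (hδ : 0 < δ)
    (h : ρ ≤ p * μ + q) :
    ρ / √(a ^ 2 * μ ^ 2 + δ ^ 2) ≤ √((p / a) ^ 2 + (q / δ) ^ 2) := by
  rw [div_le_iff₀ (Real.sqrt_pos.2 (by positivity))]
  calc ρ ≤ p / a * (a * μ) + q / δ * δ := by convert h using 1; field_simp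
    _ ≤ √((p / a) ^ 2 + (q / δ) ^ 2) * √((a * μ) ^ 2 + δ ^ 2) :=
        Real.mul_add_mul_le_sqrt_mul_sqrt _ _ _ _
    _ = _ := by rw [mul_pow]

theorem EuclideanSpace.norm_toLp_star {n 𝕜 : Type*} [Fintype n] [RCLike 𝕜] (y : n → 𝕜) :
    ‖toLp 2 (star y)‖ = ‖toLp 2 y‖ := by
  simp [EuclideanSpace.norm_eq]

namespace Matrix

variable {m n 𝕜 : Type*} [Fintype n]

theorem vecMulVec_star_mulVec [RCLike 𝕜] (x : m → 𝕜) (y : n → 𝕜) :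
    vecMulVec x (star y) *ᵥ y = ((‖toLp 2 y‖ ^ 2 : ℝ) : 𝕜) • x := by
  rw [vecMulVec_mulVec, op_smul_eq_smul, dotProduct_comm, ← EuclideanSpace.inner_toLp_toLp,
    inner_self_eq_norm_sq_to_K, RCLike.ofReal_pow]

variable [Fintype m]

theorem frobenius_norm_sq_eq {α : Type*} [SeminormedAddCommGroup α] (A : Matrix m n α) :
    ‖A‖ ^ 2 = ∑ i, ∑ j, ‖A i j‖ ^ 2 := by
  change ‖toLp 2 fun i => toLp 2 fun j => A i j‖ ^ 2 = _
  simp only [PiLp.norm_sq_eq_of_L2]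

theorem frobenius_norm_eq_sqrt {α : Type*} [SeminormedAddCommGroup α] (A : Matrix m n α) :
    ‖A‖ = √(∑ i, ∑ j, ‖A i j‖ ^ 2) := by
  rw [← frobenius_norm_sq_eq, Real.sqrt_sq (norm_nonneg A)]

variable [RCLike 𝕜]

theorem frobenius_norm_mulVec_le (A : Matrix m n 𝕜) (v : n → 𝕜) :
    ‖toLp 2 (A *ᵥ v)‖ ≤ ‖A‖ * ‖toLp 2 v‖ := by
  rw [← frobenius_norm_replicateCol (ι := Unit), replicateCol_mulVec,
    ← frobenius_norm_replicateCol (ι := Unit) v]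
  exact frobenius_norm_mul _ _

theorem frobenius_norm_vecMulVec (x : m → 𝕜) (y : n → 𝕜) :
    ‖vecMulVec x y‖ = ‖toLp 2 x‖ * ‖toLp 2 y‖ := by
  rw [← sq_eq_sq₀ (norm_nonneg _) (by positivity), frobenius_norm_sq_eq, mul_pow,
    EuclideanSpace.norm_sq_eq, EuclideanSpace.norm_sq_eq, Finset.sum_mul_sum]
  simp [vecMulVec_apply, norm_mul, mul_pow]

theorem norm_sub_mulVec_le_of_add_mulVec_eq {A dA : Matrix m n 𝕜} {d dd : m → 𝕜} {u : n → 𝕜}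
    (h : (A + dA) *ᵥ u = d + dd) :
    ‖toLp 2 (d - A *ᵥ u)‖ ≤ ‖dA‖ * ‖toLp 2 u‖ + ‖toLp 2 dd‖ := by
  have hr : d - A *ᵥ u = dA *ᵥ u - dd := by
    rw [sub_eq_sub_iff_add_eq_add, ← h, add_mulVec, add_comm]
  rw [hr, toLp_sub]
  calc _ ≤ ‖toLp 2 (dA *ᵥ u)‖ + ‖toLp 2 dd‖ := norm_sub_le _ _
    _ ≤ _ := by gcongr; exact frobenius_norm_mulVec_le _ _

noncomputable def relPerturbationNorm (A dA : Matrix m n 𝕜) (d dd : m → 𝕜) : ℝ :=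
  √((‖dA‖ / ‖A‖) ^ 2 + (‖toLp 2 dd‖ / ‖toLp 2 d‖) ^ 2)

variable (A : Matrix m n 𝕜) (d : m → 𝕜) (u : n → 𝕜)

theorem le_relPerturbationNorm_of_add_mulVec_eq (hA : A ≠ 0) (hd : d ≠ 0)
    {dA : Matrix m n 𝕜} {dd : m → 𝕜} (h : (A + dA) *ᵥ u = d + dd) :
    ‖toLp 2 (d - A *ᵥ u)‖ / √(‖A‖ ^ 2 * ‖toLp 2 u‖ ^ 2 + ‖toLp 2 d‖ ^ 2) ≤
      relPerturbationNorm A dA d dd :=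
  Real.div_sqrt_le_sqrt_of_le_mul_add (norm_pos_iff.2 hA)
    (norm_pos_iff.2 ((toLp_eq_zero 2).not.2 hd)) (norm_sub_mulVec_le_of_add_mulVec_eq h)

theorem exists_add_mulVec_eq_and_relPerturbationNorm_eq (hA : A ≠ 0) (hd : d ≠ 0) :
    ∃ (dA : Matrix m n 𝕜) (dd : m → 𝕜), (A + dA) *ᵥ u = d + dd ∧
      relPerturbationNorm A dA d dd =
        ‖toLp 2 (d - A *ᵥ u)‖ / √(‖A‖ ^ 2 * ‖toLp 2 u‖ ^ 2 + ‖toLp 2 d‖ ^ 2) := by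
  simp only [relPerturbationNorm]
  set r := d - A *ᵥ u with hr
  set a := ‖A‖
  set μ := ‖toLp 2 u‖
  set δ := ‖toLp 2 d‖
  set s := a ^ 2 * μ ^ 2 + δ ^ 2 with hs_def
  have ha : 0 < a := norm_pos_iff.2 hA
  have hδ : 0 < δ := norm_pos_iff.2 ((toLp_eq_zero 2).not.2 hd)
  have hs : 0 < s := by positivity
  refine ⟨((a ^ 2 / s : ℝ) : 𝕜) • vecMulVec r (star u), -((δ ^ 2 / s : ℝ) : 𝕜) • r, ?_, ?_⟩
  · rw [add_mulVec, smul_mulVec, vecMulVec_star_mulVec, smul_smul, neg_smul, ← sub_eq_add_neg,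
      eq_sub_iff_add_eq, add_assoc, ← add_smul, ← RCLike.ofReal_mul, ← RCLike.ofReal_add,
      show a ^ 2 / s * μ ^ 2 + δ ^ 2 / s = 1 by
        rw [div_mul_eq_mul_div, ← add_div, div_self hs.ne'],
      RCLike.ofReal_one, one_smul, hr, add_sub_cancel]
  · have hdA : ‖((a ^ 2 / s : ℝ) : 𝕜) • vecMulVec r (star u)‖ = a ^ 2 / s * (‖toLp 2 r‖ * μ) := by
      rw [norm_smul, RCLike.norm_ofReal, abs_of_nonneg (by positivity), frobenius_norm_vecMulVec,
        EuclideanSpace.norm_toLp_star]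
    have hdd : ‖toLp 2 (-((δ ^ 2 / s : ℝ) : 𝕜) • r)‖ = δ ^ 2 / s * ‖toLp 2 r‖ := by
      rw [toLp_smul, norm_smul, norm_neg, RCLike.norm_ofReal, abs_of_nonneg (by positivity)]
    rw [hdA, hdd, ← Real.sqrt_sq (by positivity : 0 ≤ ‖toLp 2 r‖ / √s)]
    congr 1
    rw [div_pow ‖toLp 2 r‖, Real.sq_sqrt hs.le]
    field_simp
    rw [hs_def]
    ring

theorem isLeast_relPerturbationNorm (hA : A ≠ 0) (hd : d ≠ 0) :
    IsLeast { η : ℝ | ∃ (dA : Matrix m n 𝕜) (dd : m → 𝕜),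
        (A + dA) *ᵥ u = d + dd ∧ η = relPerturbationNorm A dA d dd }
      (‖toLp 2 (d - A *ᵥ u)‖ / √(‖A‖ ^ 2 * ‖toLp 2 u‖ ^ 2 + ‖toLp 2 d‖ ^ 2)) := by
  obtain ⟨dA, dd, h, hη⟩ := exists_add_mulVec_eq_and_relPerturbationNorm_eq A d u hA hd
  refine ⟨⟨dA, dd, h, hη.symm⟩, ?_⟩
  rintro η ⟨dA, dd, h, rfl⟩
  exact le_relPerturbationNorm_of_add_mulVec_eq A d u hA hd h

end Matrix

theorem rigal_gaches_backward_error_general (N : ℕ) (A : Matrix (Fin N) (Fin N) ℂ)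
    (hA : A ≠ 0) (d u : Fin N → ℂ) (hd : d ≠ 0) :
    IsLeast
      { v : ℝ | ∃ (dA : Matrix (Fin N) (Fin N) ℂ) (dd : Fin N → ℂ),
          (A + dA).mulVec u = d + dd ∧
          v = Real.sqrt
            ((Real.sqrt (∑ i, ∑ j, ‖dA i j‖ ^ 2) /
                Real.sqrt (∑ i, ∑ j, ‖A i j‖ ^ 2)) ^ 2 +
              (Real.sqrt (∑ i, ‖dd i‖ ^ 2) / Real.sqrt (∑ i, ‖d i‖ ^ 2)) ^ 2) }
      (Real.sqrt (∑ i, ‖(d - A.mulVec u) i‖ ^ 2) /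
        Real.sqrt ((∑ i, ∑ j, ‖A i j‖ ^ 2) * (∑ i, ‖u i‖ ^ 2) + ∑ i, ‖d i‖ ^ 2)) := by
  have key := A.isLeast_relPerturbationNorm d u hA hd
  rw [frobenius_norm_sq_eq, EuclideanSpace.norm_sq_eq, EuclideanSpace.norm_sq_eq] at key
  simpa only [relPerturbationNorm, frobenius_norm_eq_sqrt, EuclideanSpace.norm_eq,
    PiLp.toLp_apply] using key

/-- Rigal–Gaches formula: the normwise backward error
`min ‖(‖ΔA‖_F/‖A‖_F, ‖Δd‖₂/‖d‖₂)‖₂` over all `ΔA, Δd` with `(A + ΔA) ũ = d + Δd`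
equals `‖d − A ũ‖₂ / √(‖A‖_F² ‖ũ‖₂² + ‖d‖₂²)`. -/
theorem rigal_gaches_backward_error (N : ℕ) (A : Matrix (Fin N) (Fin N) ℂ)
    (hA : A ≠ 0) (d u : Fin N → ℂ) (hd : d ≠ 0) (hu : u ≠ 0) :
    IsLeast
      { v : ℝ | ∃ (dA : Matrix (Fin N) (Fin N) ℂ) (dd : Fin N → ℂ),
          (A + dA).mulVec u = d + dd ∧
          v = Real.sqrt
            ((Real.sqrt (∑ i, ∑ j, ‖dA i j‖ ^ 2) /
                Real.sqrt (∑ i, ∑ j, ‖A i j‖ ^ 2)) ^ 2 +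
              (Real.sqrt (∑ i, ‖dd i‖ ^ 2) / Real.sqrt (∑ i, ‖d i‖ ^ 2)) ^ 2) }
      (Real.sqrt (∑ i, ‖(d - A.mulVec u) i‖ ^ 2) /
        Real.sqrt ((∑ i, ∑ j, ‖A i j‖ ^ 2) * (∑ i, ‖u i‖ ^ 2) + ∑ i, ‖d i‖ ^ 2)) :=
  rigal_gaches_backward_error_general N A hA d u hd
end
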